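/- arXiv:1305.0092 — 2 statements merged into one kernel-verified Lean document; each statement's English description precedes it below -/
import Mathlib

section
/- For r_s > 0, the function g(r) = r(1 + r_s/(4r))² satisfies the differential equation r_s/g(r) = 1 - (r·g'(r)/g(r))² for all r > r_s/4. -/
/-!
With `a = r_s / 4` the function is `g x = (x + a)² / x`, so `g' x = (x + a)(x - a) / x²` and
`x g'(x) / g(x) = (x - a) / (x + a)`. The equation is then the difference of squares
`(x + a)² - (x - a)² = 4 a x`.
-/

theorem mul_one_add_div_sq_eq (a x : ℝ) : x * (1 + a / x) ^ 2 = (x + a) ^ 2 / x := by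
  rcases eq_or_ne x 0 with rfl | hx
  · simp
  · field_simp

theorem hasDerivAt_mul_one_add_div_sq (a : ℝ) {x : ℝ} (hx : x ≠ 0) :
    HasDerivAt (fun y => y * (1 + a / y) ^ 2) ((x + a) * (x - a) / x ^ 2) x := by
  have hquot : HasDerivAt (fun y => (y + a) ^ 2 / y) ((x + a) * (x - a) / x ^ 2) x := by
    refine ((((hasDerivAt_id' x).add_const a).pow 2).div (hasDerivAt_id' x) hx).congr_deriv ?_
    simp only [Pi.pow_apply]
    field_simp
    ring
  simpa only [← mul_one_add_div_sq_eq] using hquot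

theorem mul_deriv_div_eq (a : ℝ) {x : ℝ} (hx : x ≠ 0) (hxa : x + a ≠ 0) :
    x * deriv (fun y => y * (1 + a / y) ^ 2) x / (x * (1 + a / x) ^ 2) = (x - a) / (x + a) := by
  rw [(hasDerivAt_mul_one_add_div_sq a hx).deriv, mul_one_add_div_sq_eq]
  field_simp

theorem one_sub_sq_sub_div_add (a x : ℝ) (hxa : x + a ≠ 0) :
    1 - ((x - a) / (x + a)) ^ 2 = 4 * a * x / (x + a) ^ 2 := by
  field_simp
  ring

theorem schwarzschild_isotropic_ode (rs : ℝ) (hrs : 0 < rs) (r : ℝ) (hr : rs / 4 < r) :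
    let g : ℝ → ℝ := fun x => x * (1 + rs / (4 * x)) ^ 2
    rs / g r = 1 - (r * deriv g r / g r) ^ 2 := by
  intro g
  have hr0 : r ≠ 0 := by linarith
  have hra : r + rs / 4 ≠ 0 := by linarith
  have hg : g = fun x => x * (1 + rs / 4 / x) ^ 2 := by
    funext x
    rw [div_div]
  simp only [hg]
  rw [mul_deriv_div_eq _ hr0 hra, one_sub_sq_sub_div_add _ _ hra, mul_one_add_div_sq_eq]
  field_simp
end

section
/- For real constants r_s, r_Q with r_s² /4 > r_Q² > 0, the function g(r) = r(1 + (r_s²/4 - r_Q²)/(4r²)) + r_s/2 satisfies r_s/g(r) - r_Q²/g(r)² = 1 - (r·g'(r)/g(r))² for all sufficiently large r > 0 (specifically whenever g(r) > 0). -/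
/-!
Write `g x = x + c / (4x) + m`, so that `x g' x = x - c / (4x)`. Then
`g² - (x g')² = (g - x g')(g + x g') = (c / (2x) + m)(2x + m) = 2m g - (m² - c)`,
and with `m = r_s / 2`, `c = r_s² / 4 - r_Q²` dividing by `g²` gives the equation.
-/

lemma hasDerivAt_mul_one_add_div_sq_add (c m : ℝ) {x : ℝ} (hx : x ≠ 0) :
    HasDerivAt (fun y => y * (1 + c / (4 * y ^ 2)) + m) (1 - c / (4 * x ^ 2)) x := by
  have hsum : HasDerivAt (fun y => y + c / 4 * y⁻¹ + m) (1 + c / 4 * -(x ^ 2)⁻¹) x :=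
    ((hasDerivAt_id x).add ((hasDerivAt_inv hx).const_mul (c / 4))).add_const m
  refine (hsum.congr_of_eventuallyEq ?_).congr_deriv (by field_simp; ring)
  filter_upwards [eventually_ne_nhds hx] with y hy
  field_simp

lemma sq_sub_sq_mul_one_sub_div_sq (c m : ℝ) {x : ℝ} (hx : x ≠ 0) :
    (x * (1 + c / (4 * x ^ 2)) + m) ^ 2 - (x * (1 - c / (4 * x ^ 2))) ^ 2
      = 2 * m * (x * (1 + c / (4 * x ^ 2)) + m) - (m ^ 2 - c) := by
  field_simp
  ring

theorem reissner_nordstrom_isotropic_ode_general (rs rQ : ℝ)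
    (r : ℝ) (hr : 0 < r)
    (hg : 0 < r * (1 + (rs ^ 2 / 4 - rQ ^ 2) / (4 * r ^ 2)) + rs / 2) :
    let g : ℝ → ℝ := fun x => x * (1 + (rs ^ 2 / 4 - rQ ^ 2) / (4 * x ^ 2)) + rs / 2
    rs / g r - rQ ^ 2 / (g r) ^ 2 = 1 - (r * deriv g r / g r) ^ 2 := by
  intro g
  rw [(hasDerivAt_mul_one_add_div_sq_add _ _ hr.ne').deriv]
  have hsq : g r ^ 2 - (r * (1 - (rs ^ 2 / 4 - rQ ^ 2) / (4 * r ^ 2))) ^ 2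
      = rs * g r - rQ ^ 2 :=
    (sq_sub_sq_mul_one_sub_div_sq _ (rs / 2) hr.ne').trans (by ring)
  generalize r * (1 - (rs ^ 2 / 4 - rQ ^ 2) / (4 * r ^ 2)) = D at hsq ⊢
  have hG : g r ≠ 0 := hg.ne'
  generalize g r = G at hG hsq ⊢
  field_simp
  linear_combination -hsq

theorem reissner_nordstrom_isotropic_ode (rs rQ : ℝ)
    (h1 : rQ ^ 2 > 0) (h2 : rs ^ 2 / 4 > rQ ^ 2) (r : ℝ) (hr : 0 < r)
    (hg : 0 < r * (1 + (rs ^ 2 / 4 - rQ ^ 2) / (4 * r ^ 2)) + rs / 2) :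
    let g : ℝ → ℝ := fun x => x * (1 + (rs ^ 2 / 4 - rQ ^ 2) / (4 * x ^ 2)) + rs / 2
    rs / g r - rQ ^ 2 / (g r) ^ 2 = 1 - (r * deriv g r / g r) ^ 2 :=
  reissner_nordstrom_isotropic_ode_general rs rQ r hr hg
end
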